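/- Let Q̃ ∈ L(H) be positive definite (trivial kernel) and trace-class, ã ∈ H and c ∈ ℝ. Suppose h̃₀ ∈ H is a minimizer of Ṽ(h) := ⟨Q̃h, h⟩ − 2⟨ã, h⟩ + c, and for λ > 0 let h̃_λ := (Q̃ + λ)⁻¹ ã be the minimizer of Ṽ_λ(h) := Ṽ(h) + λ‖h‖². Then h̃_λ → h̃₀ in H as λ → 0 from above. Furthermore, if Q̃ = Q := E[k_Θ ⊗ k_Θ] is the kernel covariance operator, then ‖h̃_λ − h̃₀‖_{L²(μ)} ≤ (√λ / 2) ‖h̃₀‖ for every λ > 0. -/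

import Mathlib

open MeasureTheory Filter
open scoped RealInnerProductSpace

universe u

/-- A bounded operator on a real inner product space is positive semidefinite if it is
self-adjoint and has nonnegative quadratic form. -/
def IsPosSemidef {H : Type u} [NormedAddCommGroup H] [InnerProductSpace ℝ H]
    (T : H →L[ℝ] H) : Prop :=
  (∀ x y : H, ⟪T x, y⟫ = ⟪x, T y⟫) ∧ ∀ x : H, 0 ≤ ⟪T x, x⟫

/-- A (positive) bounded operator is trace-class if the sum of its diagonal entries with
respect to some Hilbert basis is finite. -/
def IsTraceClassOp {H : Type u} [NormedAddCommGroup H] [InnerProductSpace ℝ H]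
    (T : H →L[ℝ] H) : Prop :=
  ∃ (ι : Type u) (e : HilbertBasis ι ℝ H), Summable fun i : ι => ⟪T (e i), e i⟫

/-- The quadratic functional Ṽ(h) = ⟨Q̃h, h⟩ − 2⟨ã, h⟩ + c. -/
noncomputable def quadFun {H : Type u} [NormedAddCommGroup H]
    [InnerProductSpace ℝ H] (Q : H →L[ℝ] H) (a : H) (c : ℝ) (h : H) : ℝ :=
  ⟪Q h, h⟫ - 2 * ⟪a, h⟫ + c


/-!
A minimizer `h₀` of `Ṽ` solves the normal equation `Q h₀ = a`, hence
`h̃_λ - h₀ = (Q + λ)⁻¹ (Q h₀) - h₀ = -λ u_λ` with `u_λ = (Q + λ)⁻¹ h₀`.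

Convergence: the operators `λ (Q + λ)⁻¹` have norm at most `1` and send `Q v` to
`λ v - λ² (Q + λ)⁻¹ v = O(λ)`. A symmetric operator with trivial kernel has dense range, so by
equicontinuity `λ (Q + λ)⁻¹ h₀ → 0`.

Rate: `‖h̃_λ - h₀‖²_{L²(μ)} = ⟪Q (λ u_λ), λ u_λ⟫ = λ² ⟪Q u_λ, u_λ⟫`, and by AM-GM
`4 λ ⟪Q u_λ, u_λ⟫ ≤ ‖Q u_λ + λ u_λ‖² = ‖h₀‖²`.
-/

open Topology

section QuadraticFunctional

variable {H : Type*} [NormedAddCommGroup H] [InnerProductSpace ℝ H]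

theorem quadFun_add_smul {Q : H →L[ℝ] H} (hQ : (Q : H →ₗ[ℝ] H).IsSymmetric) (a : H) (c : ℝ)
    (h v : H) (t : ℝ) :
    quadFun Q a c (h + t • v) = ⟪Q v, v⟫ * (t * t) + 2 * ⟪Q h - a, v⟫ * t + quadFun Q a c h := by
  have hsymm : ⟪Q v, h⟫ = ⟪Q h, v⟫ := (hQ v h).trans (real_inner_comm _ _)
  simp only [quadFun, map_add, map_smul, inner_add_left, inner_add_right, inner_sub_left,
    real_inner_smul_left, real_inner_smul_right]
  linear_combination t * hsymm

theorem map_eq_of_forall_quadFun_le {Q : H →L[ℝ] H} (hQ : (Q : H →ₗ[ℝ] H).IsSymmetric)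
    {a : H} {c : ℝ} {h₀ : H} (hmin : ∀ g, quadFun Q a c h₀ ≤ quadFun Q a c g) : Q h₀ = a := by
  set v := Q h₀ - a
  have hquad : ∀ t : ℝ, 0 ≤ ⟪Q v, v⟫ * (t * t) + 2 * ⟪v, v⟫ * t + 0 := fun t => by
    have := hmin (h₀ + t • v)
    rw [quadFun_add_smul hQ] at this
    linarith
  have hdiscrim := discrim_le_zero hquad
  rw [discrim, real_inner_self_eq_norm_sq] at hdiscrim
  have : (2 * ‖v‖ ^ 2) ^ 2 = 0 := le_antisymm (by simpa using hdiscrim) (sq_nonneg _)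
  simpa [v, sub_eq_zero] using this

end QuadraticFunctional

section Resolvent

variable {H : Type*} [NormedAddCommGroup H] [InnerProductSpace ℝ H]
  {Q : H →L[ℝ] H} {lam : ℝ}

theorem mul_norm_sq_le_inner_add_smul_one (hQ : ∀ x, 0 ≤ ⟪Q x, x⟫) (x : H) :
    lam * ‖x‖ ^ 2 ≤ ⟪(Q + lam • (1 : H →L[ℝ] H)) x, x⟫ := by
  have hx : ⟪(Q + lam • (1 : H →L[ℝ] H)) x, x⟫ = ⟪Q x, x⟫ + lam * ‖x‖ ^ 2 := by
    simp [inner_add_left, real_inner_smul_left]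
  linarith [hQ x]

theorem mul_norm_le_norm_add_smul_one_apply (hQ : ∀ x, 0 ≤ ⟪Q x, x⟫) (x : H) :
    lam * ‖x‖ ≤ ‖(Q + lam • (1 : H →L[ℝ] H)) x‖ := by
  rcases (norm_nonneg x).eq_or_lt with hx | hx
  · rw [← hx, mul_zero]
    exact norm_nonneg _
  refine le_of_mul_le_mul_right ?_ hx
  calc lam * ‖x‖ * ‖x‖ = lam * ‖x‖ ^ 2 := by ring
    _ ≤ ⟪(Q + lam • (1 : H →L[ℝ] H)) x, x⟫ := mul_norm_sq_le_inner_add_smul_one hQ x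
    _ ≤ ‖(Q + lam • (1 : H →L[ℝ] H)) x‖ * ‖x‖ := real_inner_le_norm _ _

variable [CompleteSpace H]

theorem isUnit_add_smul_one (hQ : ∀ x, 0 ≤ ⟪Q x, x⟫) (hlam : 0 < lam) :
    IsUnit (Q + lam • (1 : H →L[ℝ] H)) :=
  ContinuousLinearMap.isUnit_of_forall_le_norm_inner_map _ (c := ⟨lam, hlam.le⟩) hlam fun x =>
    (mul_comm _ _).trans_le ((mul_norm_sq_le_inner_add_smul_one hQ x).trans (Real.le_norm_self _))

theorem inverse_add_smul_one_apply_add_smul_one_apply (hQ : ∀ x, 0 ≤ ⟪Q x, x⟫) (hlam : 0 < lam)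
    (x : H) :
    Ring.inverse (Q + lam • (1 : H →L[ℝ] H)) ((Q + lam • (1 : H →L[ℝ] H)) x) = x := by
  rw [← mul_apply_eq_comp, Ring.inverse_mul_cancel _ (isUnit_add_smul_one hQ hlam),
    one_apply_eq_self]

theorem add_smul_one_apply_inverse_add_smul_one_apply (hQ : ∀ x, 0 ≤ ⟪Q x, x⟫) (hlam : 0 < lam)
    (x : H) :
    (Q + lam • (1 : H →L[ℝ] H)) (Ring.inverse (Q + lam • (1 : H →L[ℝ] H)) x) = x := by
  rw [← mul_apply_eq_comp, Ring.mul_inverse_cancel _ (isUnit_add_smul_one hQ hlam),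
    one_apply_eq_self]

theorem inverse_add_smul_one_apply_map (hQ : ∀ x, 0 ≤ ⟪Q x, x⟫) (hlam : 0 < lam) (x : H) :
    Ring.inverse (Q + lam • (1 : H →L[ℝ] H)) (Q x)
      = x - lam • Ring.inverse (Q + lam • (1 : H →L[ℝ] H)) x := by
  have hcancel := inverse_add_smul_one_apply_add_smul_one_apply hQ hlam x
  rw [add_apply, smul_apply, one_apply_eq_self, map_add, map_smul] at hcancel
  exact eq_sub_of_add_eq hcancel

theorem norm_smul_inverse_add_smul_one_le (hQ : ∀ x, 0 ≤ ⟪Q x, x⟫) (hlam : 0 < lam) :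
    ‖lam • Ring.inverse (Q + lam • (1 : H →L[ℝ] H))‖ ≤ 1 := by
  refine ContinuousLinearMap.opNorm_le_bound _ zero_le_one fun y => ?_
  have hy := mul_norm_le_norm_add_smul_one_apply (lam := lam) hQ
    (Ring.inverse (Q + lam • (1 : H →L[ℝ] H)) y)
  rw [add_smul_one_apply_inverse_add_smul_one_apply hQ hlam] at hy
  rwa [smul_apply, norm_smul, Real.norm_of_nonneg hlam.le, one_mul]

end Resolvent

section Density

variable {𝕜 E F : Type*} [NontriviallyNormedField 𝕜] [NormedAddCommGroup E] [NormedSpace 𝕜 E]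
  [NormedAddCommGroup F] [NormedSpace 𝕜 F]

theorem tendsto_apply_of_dense_of_eventually_norm_le {ι : Type*} {l : Filter ι}
    {T : ι → E →L[𝕜] F} {C : ℝ} (hC : ∀ᶠ i in l, ‖T i‖ ≤ C) {s : Set E} (hs : Dense s)
    {S : E →L[𝕜] F} (h : ∀ y ∈ s, Tendsto (fun i => T i y) l (𝓝 (S y))) (x : E) :
    Tendsto (fun i => T i x) l (𝓝 (S x)) := by
  set bdd := {i | ‖T i‖ ≤ C}
  let G : bdd → E →L[𝕜] F := fun i => T i
  have hG : Equicontinuous ((↑) ∘ G) :=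
    ((NormedSpace.equicontinuous_TFAE G).out 5 1).mp (⟨C, fun i => i.2⟩ : ∃ C, ∀ i, ‖G i‖ ≤ C)
  have hmap : map (↑) (comap ((↑) : bdd → ι) l) = l := by
    rw [subtype_coe_map_comap]
    exact inf_eq_left.mpr (le_principal_iff.mpr hC)
  rw [← hmap, tendsto_map'_iff]
  exact (hG x).tendsto_of_mem_closure (S.continuous.continuousAt.mono_left nhdsWithin_le_nhds)
    (fun y hy => (h y hy).comp tendsto_comap) (hs x)

end Density

theorem LinearMap.IsSymmetric.dense_range_of_ker_eq_bot {𝕜 E : Type*} [RCLike 𝕜]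
    [NormedAddCommGroup E] [InnerProductSpace 𝕜 E] [CompleteSpace E] {T : E →ₗ[𝕜] E}
    (hT : T.IsSymmetric) (hker : LinearMap.ker T = ⊥) : Dense (LinearMap.range T : Set E) := by
  rw [Submodule.dense_iff_topologicalClosure_eq_top, Submodule.topologicalClosure_eq_top_iff,
    hT.orthogonal_range, hker]

theorem four_mul_inner_le_norm_add_sq {F : Type*} [NormedAddCommGroup F] [InnerProductSpace ℝ F]
    (x y : F) : 4 * ⟪x, y⟫ ≤ ‖x + y‖ ^ 2 := by
  linarith [norm_add_sq_real x y, norm_sub_sq_real x y, sq_nonneg ‖x - y‖]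

section Regularization

variable {H : Type*} [NormedAddCommGroup H] [InnerProductSpace ℝ H] [CompleteSpace H]
  {Q : H →L[ℝ] H}

theorem tendsto_smul_inverse_add_smul_one_apply (hQsym : (Q : H →ₗ[ℝ] H).IsSymmetric)
    (hQ : ∀ x, 0 ≤ ⟪Q x, x⟫) (hker : LinearMap.ker (Q : H →ₗ[ℝ] H) = ⊥) (x : H) :
    Tendsto (fun lam : ℝ => lam • Ring.inverse (Q + lam • (1 : H →L[ℝ] H)) x) (𝓝[>] 0) (𝓝 0) := by
  refine tendsto_apply_of_dense_of_eventually_norm_le (S := 0)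
    (eventually_nhdsWithin_of_forall fun lam hlam => norm_smul_inverse_add_smul_one_le hQ hlam)
    (hQsym.dense_range_of_ker_eq_bot hker) ?_ x
  rintro _ ⟨v, rfl⟩
  have hbound : ∀ lam ∈ Set.Ioi (0 : ℝ),
      ‖(lam • Ring.inverse (Q + lam • (1 : H →L[ℝ] H))) (Q v)‖ ≤ 2 * ‖v‖ * lam := by
    intro lam (hlam : 0 < lam)
    have hv : ‖lam • Ring.inverse (Q + lam • (1 : H →L[ℝ] H)) v‖ ≤ ‖v‖ := by
      rw [← smul_apply]
      exact (ContinuousLinearMap.le_opNorm _ _).trans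
        (mul_le_of_le_one_left (norm_nonneg v) (norm_smul_inverse_add_smul_one_le hQ hlam))
    rw [smul_apply, inverse_add_smul_one_apply_map hQ hlam, norm_smul,
      Real.norm_of_nonneg hlam.le]
    nlinarith [norm_sub_le v (lam • Ring.inverse (Q + lam • (1 : H →L[ℝ] H)) v)]
  refine squeeze_zero_norm' (eventually_nhdsWithin_of_forall hbound)
    (tendsto_nhdsWithin_of_tendsto_nhds ?_)
  simpa using (continuous_const_mul (2 * ‖v‖)).tendsto 0

theorem inner_map_inverse_add_smul_one_apply_map_sub_le (hQ : ∀ x, 0 ≤ ⟪Q x, x⟫) {lam : ℝ}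
    (hlam : 0 < lam) (h : H) :
    ⟪Q (Ring.inverse (Q + lam • (1 : H →L[ℝ] H)) (Q h) - h),
        Ring.inverse (Q + lam • (1 : H →L[ℝ] H)) (Q h) - h⟫ ≤ lam / 4 * ‖h‖ ^ 2 := by
  set u := Ring.inverse (Q + lam • (1 : H →L[ℝ] H)) h
  have hu : Q u + lam • u = h := add_smul_one_apply_inverse_add_smul_one_apply hQ hlam h
  have hdiff : Ring.inverse (Q + lam • (1 : H →L[ℝ] H)) (Q h) - h = -(lam • u) := by
    rw [inverse_add_smul_one_apply_map hQ hlam, sub_sub_cancel_left]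
  have hamgm : 4 * lam * ⟪Q u, u⟫ ≤ ‖h‖ ^ 2 := by
    have := four_mul_inner_le_norm_add_sq (Q u) (lam • u)
    rwa [hu, real_inner_smul_right, ← mul_assoc] at this
  rw [hdiff, map_neg, map_smul, inner_neg_neg, real_inner_smul_left, real_inner_smul_right]
  nlinarith

end Regularization

theorem stmt_16_general {H : Type u} [NormedAddCommGroup H] [InnerProductSpace ℝ H]
    [CompleteSpace H]
    (Q : H →L[ℝ] H) (hQ_pos : IsPosSemidef Q) (hQ_ker : LinearMap.ker (Q : H →ₗ[ℝ] H) = ⊥)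
    (a : H) (c : ℝ)
    (h₀ : H) (hmin : ∀ g : H, quadFun Q a c h₀ ≤ quadFun Q a c g)
    {Γ : Type u} [MeasurableSpace Γ] (μ : Measure Γ) (k : Γ → H) :
    Tendsto (fun lam : ℝ => Ring.inverse (Q + lam • (1 : H →L[ℝ] H)) a)
      (nhdsWithin 0 (Set.Ioi 0)) (nhds h₀) ∧
    ((∀ f g : H, (⟪Q f, g⟫ : ℝ) = ∫ θ, (⟪f, k θ⟫ : ℝ) * (⟪g, k θ⟫ : ℝ) ∂μ) →
      ∀ lam : ℝ, 0 < lam →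
        Real.sqrt (∫ θ, (⟪Ring.inverse (Q + lam • (1 : H →L[ℝ] H)) a - h₀, k θ⟫ : ℝ) ^ 2 ∂μ)
          ≤ Real.sqrt lam / 2 * ‖h₀‖) := by
  obtain ⟨hQsym, hQ⟩ := hQ_pos
  obtain rfl : Q h₀ = a := map_eq_of_forall_quadFun_le hQsym hmin
  refine ⟨?_, fun hcov lam hlam => ?_⟩
  · have hlim := tendsto_const_nhds (x := h₀).sub
      (tendsto_smul_inverse_add_smul_one_apply hQsym hQ hQ_ker h₀)
    rw [sub_zero] at hlim
    exact hlim.congr' (eventually_nhdsWithin_of_forall fun lam hlam =>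
      (inverse_add_smul_one_apply_map hQ hlam h₀).symm)
  · simp_rw [sq, ← hcov]
    rw [Real.sqrt_le_left (by positivity), mul_pow, div_pow, Real.sq_sqrt hlam.le]
    linarith [inner_map_inverse_add_smul_one_apply_map_sub_le hQ hlam h₀]

/-- Let Q̃ be positive definite (trivial kernel) and trace-class, ã ∈ H,
c ∈ ℝ.  If h̃₀ minimizes Ṽ(h) = ⟨Q̃h,h⟩ − 2⟨ã,h⟩ + c and h̃_λ := (Q̃+λ)⁻¹ã is
the minimizer of Ṽ(h) + λ‖h‖², then h̃_λ → h̃₀ in H as λ ↓ 0.  Furthermore, if Q̃ = Q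
is the kernel covariance operator of a reproducing kernel Hilbert space
(⟨Qf, g⟩ = ∫ f(θ)g(θ) μ(dθ) with f(θ) = ⟨f, k_θ⟩), then
‖h̃_λ − h̃₀‖_{L²(μ)} ≤ (√λ/2)‖h̃₀‖ for every λ > 0. -/
theorem stmt_16 {H : Type u} [NormedAddCommGroup H] [InnerProductSpace ℝ H]
    [CompleteSpace H]
    (Q : H →L[ℝ] H) (hQ_pos : IsPosSemidef Q) (hQ_ker : LinearMap.ker (Q : H →ₗ[ℝ] H) = ⊥)
    (hQ_tc : IsTraceClassOp Q)
    (a : H) (c : ℝ)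
    (h₀ : H) (hmin : ∀ g : H, quadFun Q a c h₀ ≤ quadFun Q a c g)
    {Γ : Type u} [MetricSpace Γ] [TopologicalSpace.SeparableSpace Γ]
    [MeasurableSpace Γ] [BorelSpace Γ]
    (μ : Measure Γ) [IsProbabilityMeasure μ] (k : Γ → H) :
    Tendsto (fun lam : ℝ => Ring.inverse (Q + lam • (1 : H →L[ℝ] H)) a)
      (nhdsWithin 0 (Set.Ioi 0)) (nhds h₀) ∧
    ((∀ f g : H, (⟪Q f, g⟫ : ℝ) = ∫ θ, (⟪f, k θ⟫ : ℝ) * (⟪g, k θ⟫ : ℝ) ∂μ) →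
      ∀ lam : ℝ, 0 < lam →
        Real.sqrt (∫ θ, (⟪Ring.inverse (Q + lam • (1 : H →L[ℝ] H)) a - h₀, k θ⟫ : ℝ) ^ 2 ∂μ)
          ≤ Real.sqrt lam / 2 * ‖h₀‖) :=
  stmt_16_general Q hQ_pos hQ_ker a c h₀ hmin μ k
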